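/- arXiv:2505.01688 — 2 statements merged into one kernel-verified Lean document; each statement's English description precedes it below -/
import Mathlib

section
/- Piecewise-constant phase integral (Doppler spoofing kernel): let ΔT > 0, K a positive integer, T = KΔT, and μ̃, μ ∈ ℝ. If the RIS phase is φ(t) = 2π μ̃ ⌈t/ΔT⌉ ΔT, then ∫₀^T e^{-i(2πμ t - φ(t))} dt = T · e^{iπ μ̃ ΔT} · e^{-iπ(μ - μ̃)T} · sinc(μ ΔT) · F(K, πΔT(μ - μ̃)), where F(K, x) = sin(Kx)/(K sin x) (extended by its limit value at multiples of π) and sinc(x) = sin(πx)/(πx). -/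
open Real
open MeasureTheory

noncomputable def sinc (x : ℝ) : ℝ := if x = 0 then 1 else Real.sin (π * x) / (π * x)

/-- Dirichlet-type kernel `sin (K x) / (K sin x)`, extended by its limit value
(`(cos x) ^ (K - 1)`, which equals `(-1) ^ (m * (K - 1))` at `x = m π`) where `sin x = 0`. -/
noncomputable def dirF (K : ℕ) (x : ℝ) : ℝ :=
  if Real.sin x = 0 then (Real.cos x) ^ (K - 1)
  else Real.sin ((K : ℝ) * x) / ((K : ℝ) * Real.sin x)

lemma inner_int (μ c d : ℝ) :
    ∫ t in c..d, Complex.exp (((-(2*π*μ):ℝ):ℂ) * Complex.I * t)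
      = ((d:ℂ) - c) * Complex.exp (((-(π*μ*(c+d)):ℝ):ℂ) * Complex.I) * (_root_.sinc (μ*(d-c)) : ℝ) := by
  rcases eq_or_ne μ 0 with hμ | hμ
  · simp [hμ, _root_.sinc]
  have hπ := Real.pi_pos
  have hc : ((-(2*π*μ):ℝ):ℂ) * Complex.I ≠ 0 := by
    apply mul_ne_zero _ Complex.I_ne_zero
    have : (2*π*μ) ≠ 0 := by positivity
    simpa using this
  rw [integral_exp_mul_complex hc]
  rcases eq_or_ne d c with hdc | hdc
  · simp [hdc, sub_eq_zero]
  have hμdc : μ * (d - c) ≠ 0 := mul_ne_zero hμ (sub_ne_zero.2 hdc)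
  rw [_root_.sinc, if_neg hμdc]
  have h1 : (((-(2*π*μ):ℝ):ℂ) * Complex.I) * (d:ℂ)
      = ((-(π*μ*(c+d)):ℝ):ℂ) * Complex.I + ((-(π*(μ*(d-c))):ℝ):ℂ) * Complex.I := by
    push_cast; ring
  have h2 : (((-(2*π*μ):ℝ):ℂ) * Complex.I) * (c:ℂ)
      = ((-(π*μ*(c+d)):ℝ):ℂ) * Complex.I + (((π*(μ*(d-c))):ℝ):ℂ) * Complex.I := by
    push_cast; ring
  rw [h1, h2, Complex.exp_add, Complex.exp_add]
  have hsin : ((Real.sin (π * (μ*(d-c))) : ℝ) : ℂ)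
      = (Complex.exp (((-(π*(μ*(d-c))):ℝ):ℂ) * Complex.I)
          - Complex.exp ((((π*(μ*(d-c))):ℝ):ℂ) * Complex.I)) * Complex.I / 2 := by
    rw [Complex.ofReal_sin, Complex.sin]
    push_cast
    ring_nf
  push_cast [hsin]
  set e0 := Complex.exp (((-(π*μ*(c+d)):ℝ):ℂ) * Complex.I) with he0
  set em := Complex.exp (((-(π*(μ*(d-c))):ℝ):ℂ) * Complex.I) with hem
  set ep := Complex.exp ((((π*(μ*(d-c))):ℝ):ℂ) * Complex.I) with hep
  push_cast at *
  have hπc : (π:ℂ) ≠ 0 := by exact_mod_cast hπ.ne'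
  have hμc : (μ:ℂ) ≠ 0 := by exact_mod_cast hμ
  have hdcc : (d:ℂ) - c ≠ 0 := sub_ne_zero.2 (fun h => hdc (by exact_mod_cast h))
  field_simp
  ring_nf
  simp only [Complex.I_sq]
  ring


lemma keylem (n : ℕ) (hn : (n:ℂ) ≠ 0) (z A : ℂ) (hz : z ≠ 0) (hA : A ≠ 0)
    (hz' : z⁻¹ - z ≠ 0) (hd2 : (z^2)⁻¹ - 1 ≠ 0) :
    z * (z^2)⁻¹ * (((A^2)⁻¹ - 1)/((z^2)⁻¹ - 1))
      = (n:ℂ) * A⁻¹ * ((A⁻¹ - A) * Complex.I / 2 / ((n:ℂ) * ((z⁻¹ - z) * Complex.I / 2))) := by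
  have hP : z⁻¹ - z = (1 - z^2)/z := by field_simp
  have hP2 : (z^2)⁻¹ - 1 = (1 - z^2)/z^2 := by field_simp
  have hQ : (A^2)⁻¹ - 1 = (1 - A^2)/A^2 := by field_simp
  have hQ1 : A⁻¹ - A = (1 - A^2)/A := by field_simp
  have hPne : (1 : ℂ) - z^2 ≠ 0 := by
    intro h
    apply hd2
    rw [show z^2 = 1 by linear_combination -h]
    simp
  rw [hP, hP2, hQ, hQ1]
  generalize (1 : ℂ) - z^2 = P at hPne ⊢
  generalize (1 : ℂ) - A^2 = Q
  field_simp [hn, hA, hz, hPne, Complex.I_ne_zero]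

set_option maxHeartbeats 1000000 in
theorem stmt_8 (ΔT : ℝ) (hΔT : 0 < ΔT) (K : ℕ) (hK : 0 < K) (T : ℝ) (hT : T = (K : ℝ) * ΔT)
    (μt μ : ℝ) :
    ∫ t in (0:ℝ)..T,
        Complex.exp (-Complex.I *
          ((2 * π * μ * t - 2 * π * μt * (⌈t / ΔT⌉ : ℝ) * ΔT : ℝ) : ℂ)) =
      (T : ℂ) * Complex.exp (Complex.I * ((π * μt * ΔT : ℝ) : ℂ)) *
        Complex.exp (-Complex.I * ((π * (μ - μt) * T : ℝ) : ℂ)) *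
        ((_root_.sinc (μ * ΔT) : ℝ) : ℂ) * ((dirF K (π * ΔT * (μ - μt)) : ℝ) : ℂ) := by
  have hπ := Real.pi_pos
  set f : ℝ → ℂ := fun t => Complex.exp (-Complex.I *
          ((2 * π * μ * t - 2 * π * μt * (⌈t / ΔT⌉ : ℝ) * ΔT : ℝ) : ℂ)) with hf
  set x : ℝ := π * ΔT * (μ - μt) with hx
  set z : ℂ := Complex.exp ((x:ℂ) * Complex.I) with hz
  set w : ℂ := Complex.exp (((-2*x:ℝ):ℂ) * Complex.I) with hw
  have hz0 : z ≠ 0 := Complex.exp_ne_zero _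
  -- measurability / integrability
  have hmeas : Measurable f := by
    apply Complex.measurable_exp.comp
    apply Measurable.const_mul
    apply Complex.measurable_ofReal.comp
    apply Measurable.sub
    · exact (measurable_const.mul measurable_id)
    · exact (measurable_const.mul (measurable_from_top.comp
        (measurable_id.div_const ΔT).ceil)).mul measurable_const
  have hnorm : ∀ t, ‖f t‖ ≤ 1 := by
    intro t
    rw [hf]
    simp only
    rw [show -Complex.I * ((2 * π * μ * t - 2 * π * μt * (⌈t / ΔT⌉ : ℝ) * ΔT : ℝ) : ℂ)
      = ((-(2 * π * μ * t - 2 * π * μt * (⌈t / ΔT⌉ : ℝ) * ΔT) : ℝ):ℂ) * Complex.I by push_cast; ring]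
    rw [Complex.norm_exp_ofReal_mul_I]
  have hint : ∀ a b : ℝ, IntervalIntegrable f volume a b := by
    intro a b
    rw [intervalIntegrable_iff]
    apply Measure.integrableOn_of_bounded (M := 1) measure_Ioc_lt_top.ne hmeas.aestronglyMeasurable
    exact Filter.Eventually.of_forall hnorm
  -- split integral
  have hsplit : ∫ t in (0:ℝ)..T, f t
      = ∑ k ∈ Finset.range K, ∫ t in ((k:ℝ)*ΔT)..((((k+1):ℕ):ℝ)*ΔT), f t := by
    rw [intervalIntegral.sum_integral_adjacent_intervals
      (a := fun k : ℕ => (k:ℝ) * ΔT) (n := K) (fun k _ => hint _ _)]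
    norm_num [hT]
  -- per-interval value
  have hterm : ∀ k : ℕ, (∫ t in ((k:ℝ)*ΔT)..((((k+1):ℕ):ℝ)*ΔT), f t)
      = ((ΔT * _root_.sinc (μ*ΔT) : ℝ):ℂ) * Complex.exp (((π*μ*ΔT:ℝ):ℂ) * Complex.I) * w^(k+1) := by
    intro k
    have hk1 : (((k+1):ℕ):ℝ) = (k:ℝ) + 1 := by push_cast; ring
    rw [hk1]
    have hstep1 : (∫ t in ((k:ℝ)*ΔT)..(((k:ℝ)+1)*ΔT), f t)
        = ∫ t in ((k:ℝ)*ΔT)..(((k:ℝ)+1)*ΔT),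
            Complex.exp (((2*π*μt*((k:ℝ)+1)*ΔT :ℝ):ℂ) * Complex.I)
              * Complex.exp (((-(2*π*μ):ℝ):ℂ) * Complex.I * t) := by
      apply intervalIntegral.integral_congr_ae
      apply Filter.Eventually.of_forall
      intro t ht
      have hlt : (k:ℝ)*ΔT < ((k:ℝ)+1)*ΔT := by nlinarith
      rw [Set.uIoc_of_le hlt.le] at ht
      have hceil : (⌈t / ΔT⌉ : ℤ) = (k:ℤ) + 1 := by
        rw [Int.ceil_eq_iff]
        constructor
        · push_cast
          rw [lt_div_iff₀ hΔT]
          have := ht.1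
          nlinarith
        · rw [div_le_iff₀ hΔT]
          have := ht.2
          push_cast
          nlinarith
      rw [hf]
      simp only
      rw [← Complex.exp_add]
      congr 1
      rw [hceil]
      push_cast
      ring
    rw [hstep1, intervalIntegral.integral_const_mul, inner_int]
    have harg : μ * ((((k:ℝ)+1)*ΔT) - ((k:ℝ)*ΔT)) = μ * ΔT := by ring
    rw [harg]
    have hsub : ((((k:ℝ)+1)*ΔT : ℝ):ℂ) - (((k:ℝ)*ΔT : ℝ):ℂ) = (ΔT:ℂ) := by
      push_cast; ring
    rw [hsub]
    have hwk : w^(k+1) = Complex.exp (((((k:ℝ)+1) * (-2*x) : ℝ):ℂ) * Complex.I) := by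
      rw [hw, ← Complex.exp_nat_mul]
      congr 1
      push_cast
      ring
    have hE : Complex.exp (((2*π*μt*((k:ℝ)+1)*ΔT :ℝ):ℂ) * Complex.I)
        * Complex.exp (((-(π*μ*((k:ℝ)*ΔT+((k:ℝ)+1)*ΔT)):ℝ):ℂ) * Complex.I)
        = Complex.exp (((π*μ*ΔT:ℝ):ℂ) * Complex.I) * w^(k+1) := by
      rw [hwk, ← Complex.exp_add, ← Complex.exp_add]
      congr 1
      rw [hx]
      push_cast
      ring
    calc Complex.exp (((2*π*μt*((k:ℝ)+1)*ΔT :ℝ):ℂ) * Complex.I)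
          * ((ΔT:ℂ) * Complex.exp (((-(π*μ*((k:ℝ)*ΔT+((k:ℝ)+1)*ΔT)):ℝ):ℂ) * Complex.I)
            * ((_root_.sinc (μ*ΔT) : ℝ):ℂ))
        = (ΔT:ℂ) * ((_root_.sinc (μ*ΔT) : ℝ):ℂ) *
            (Complex.exp (((2*π*μt*((k:ℝ)+1)*ΔT :ℝ):ℂ) * Complex.I)
              * Complex.exp (((-(π*μ*((k:ℝ)*ΔT+((k:ℝ)+1)*ΔT)):ℝ):ℂ) * Complex.I)) := by ring
      _ = ((ΔT * _root_.sinc (μ*ΔT) : ℝ):ℂ) * Complex.exp (((π*μ*ΔT:ℝ):ℂ) * Complex.I) * w^(k+1) := by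
          rw [hE]; push_cast; ring
  rw [hsplit, Finset.sum_congr rfl (fun k _ => hterm k)]
  have hsum : ∑ k ∈ Finset.range K,
      ((ΔT * _root_.sinc (μ*ΔT) : ℝ):ℂ) * Complex.exp (((π*μ*ΔT:ℝ):ℂ) * Complex.I) * w^(k+1)
      = ((ΔT * _root_.sinc (μ*ΔT) : ℝ):ℂ) * Complex.exp (((π*μ*ΔT:ℝ):ℂ) * Complex.I) * w *
          ∑ k ∈ Finset.range K, w^k := by
    rw [Finset.mul_sum]
    exact Finset.sum_congr rfl (fun k _ => by ring)
  rw [hsum]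
  -- key exponential relations
  have hE0 : Complex.exp (((π*μ*ΔT:ℝ):ℂ) * Complex.I)
      = Complex.exp (Complex.I * ((π * μt * ΔT : ℝ) : ℂ)) * z := by
    rw [hz, ← Complex.exp_add]
    congr 1
    rw [hx]; push_cast; ring
  have hzK : Complex.exp ((((K:ℝ)*x : ℝ):ℂ) * Complex.I) = z^K := by
    rw [hz, ← Complex.exp_nat_mul]
    congr 1
    push_cast; ring
  have hTk : Complex.exp (-Complex.I * ((π * (μ - μt) * T : ℝ) : ℂ)) = (z^K)⁻¹ := by
    rw [← hzK, ← Complex.exp_neg]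
    congr 1
    rw [hx, hT]; push_cast; ring
  have hwz : w = (z^2)⁻¹ := by
    rw [hw, hz, ← Complex.exp_nat_mul, ← Complex.exp_neg]
    congr 1
    push_cast; ring
  rw [hE0, hTk]
  set E0 := Complex.exp (Complex.I * ((π * μt * ΔT : ℝ) : ℂ)) with hE0d
  push_cast [hT]
  rcases eq_or_ne (Real.sin x) 0 with hs | hs
  · -- degenerate case
    rw [dirF, if_pos hs]
    have hzc : z = ((Real.cos x : ℝ):ℂ) := by
      rw [hz, Complex.exp_mul_I, ← Complex.ofReal_cos, ← Complex.ofReal_sin, hs]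
      simp
    have hc2 : Real.cos x ^ 2 = 1 := by nlinarith [Real.sin_sq_add_cos_sq x]
    have hw1 : w = 1 := by
      rw [hwz, hzc]
      norm_cast
      rw [hc2]
      norm_num
    have hScount : ∑ k ∈ Finset.range K, w^k = (K:ℂ) := by simp [hw1]
    rw [hScount, hw1]
    have hcc : Real.cos x = 1 ∨ Real.cos x = -1 := by
      rcases mul_eq_zero.1 (show (Real.cos x - 1) * (Real.cos x + 1) = 0 by nlinarith) with h | h
      · left; linarith
      · right; linarith
    rcases hcc with h | h
    · rw [hzc, h]
      push_cast
      norm_num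
      ring
    · rw [hzc, h]
      push_cast
      have h2 : (((-1:ℂ))^K)⁻¹ * ((-1:ℂ))^(K-1) = -1 := by
        rw [← inv_pow, inv_neg, inv_one, ← pow_add]
        exact Odd.neg_one_pow ⟨K-1, by omega⟩
      linear_combination (-((K:ℂ) * (ΔT:ℂ) * E0 * ((_root_.sinc (μ*ΔT) : ℝ):ℂ))) * h2
  · -- generic case
    rw [dirF, if_neg hs]
    have hw_ne : w ≠ 1 := by
      intro hwone
      obtain ⟨n, hn⟩ := Complex.exp_eq_one_iff.1 (hw ▸ hwone)
      rw [show (n:ℂ) * (2 * (π:ℂ) * Complex.I) = (((n:ℝ) * (2*π) : ℝ):ℂ) * Complex.I by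
        push_cast; ring] at hn
      have h2 : (-2*x : ℝ) = (n:ℝ) * (2*π) := by
        exact_mod_cast mul_right_cancel₀ Complex.I_ne_zero hn
      have hxn : x = ((-n : ℤ):ℝ) * π := by push_cast; linarith
      exact hs (by rw [hxn]; exact Real.sin_int_mul_pi (-n))
    rw [geom_sum_eq hw_ne K]
    have hKc : ((K:ℝ):ℂ) ≠ 0 := by
      exact_mod_cast hK.ne'
    have hsin1 : ((Real.sin x : ℝ):ℂ) = (z⁻¹ - z) * Complex.I / 2 := by
      rw [Complex.ofReal_sin, Complex.sin, show -(x:ℂ)*Complex.I = -((x:ℂ)*Complex.I) by ring,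
        Complex.exp_neg, ← hz]
    have hsinK : ((Real.sin ((K:ℝ)*x) : ℝ):ℂ) = ((z^K)⁻¹ - z^K) * Complex.I / 2 := by
      rw [Complex.ofReal_sin, Complex.sin, show -((((K:ℝ)*x : ℝ)):ℂ)*Complex.I
        = -(((((K:ℝ)*x : ℝ)):ℂ)*Complex.I) by ring, Complex.exp_neg, hzK]
    have hz' : z⁻¹ - z ≠ 0 := by
      intro h
      apply hs
      have : ((Real.sin x : ℝ):ℂ) = 0 := by rw [hsin1, h]; ring
      exact_mod_cast this
    have hd : w - 1 ≠ 0 := sub_ne_zero.2 hw_ne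
    have hwK : w^K = (z^(2*K))⁻¹ := by
      rw [hwz, inv_pow, ← pow_mul]
    have hsin1C : Complex.sin (x:ℂ) = (z⁻¹ - z) * Complex.I / 2 := by
      rw [Complex.sin, show -(x:ℂ)*Complex.I = -((x:ℂ)*Complex.I) by ring,
        Complex.exp_neg, ← hz]
    have hsinKC : Complex.sin ((K:ℂ) * (x:ℂ)) = ((z^K)⁻¹ - z^K) * Complex.I / 2 := by
      have he : Complex.exp ((K:ℂ) * (x:ℂ) * Complex.I) = z ^ K := by
        rw [hz, ← Complex.exp_nat_mul]; ring_nf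
      rw [Complex.sin, show -((K:ℂ)*(x:ℂ))*Complex.I = -((K:ℂ)*(x:ℂ)*Complex.I) by ring,
        Complex.exp_neg, he]
    have hz' : z⁻¹ - z ≠ 0 := by
      intro h
      apply hs
      have : Complex.sin (x:ℂ) = 0 := by rw [hsin1C, h]; ring
      rw [← Complex.ofReal_sin] at this
      exact_mod_cast this
    have hd2 : (z^2)⁻¹ - 1 ≠ 0 := by rw [← hwz]; exact hd
    have hA0 : z^K ≠ 0 := pow_ne_zero _ hz0
    have h2K : z^(2*K) = (z^K)^2 := by rw [mul_comm, pow_mul]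
    have hKc' : (K:ℂ) ≠ 0 := by exact_mod_cast hK.ne'
    have key : z * w * ((w^K - 1)/(w - 1))
        = (K:ℂ) * (z^K)⁻¹ * (Complex.sin ((K:ℂ) * (x:ℂ)) / ((K:ℂ) * Complex.sin (x:ℂ))) := by
      rw [hsin1C, hsinKC, hwK, hwz, h2K]
      exact keylem K hKc' z (z^K) hz0 hA0 hz' hd2
    clear_value z w E0 x f
    clear hf hmeas hnorm hint hsplit hterm hsum hz hw hzK hTk hE0 hsin1 hsinK hsin1C hsinKC hx
    push_cast
    linear_combination ((ΔT:ℂ) * ((_root_.sinc (μ*ΔT) : ℝ):ℂ) * E0) * key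
end

section
/- If μ_V ∈ ℝ satisfies 0 < |μ_V ΔT| < 1/2 for ΔT > 0, then for every nonzero integer n, sinc²(μ_V ΔT) > sinc²(μ_V ΔT + n). Consequently, any candidate spoofing frequency of the form μ_V + n/ΔT with n ≠ 0 yields a strictly smaller matched-filter spoofing peak magnitude than μ_V itself. -/
open Real

theorem stmt_13 (ΔT μV : ℝ) (hΔT : 0 < ΔT) (h0 : 0 < |μV * ΔT|) (h1 : |μV * ΔT| < 1 / 2) :
    ∀ n : ℤ, n ≠ 0 → _root_.sinc (μV * ΔT + (n : ℝ)) ^ 2 < _root_.sinc (μV * ΔT) ^ 2 := by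
  intro n hn
  set x := μV * ΔT with hxdef
  have hx0 : x ≠ 0 := abs_pos.mp h0
  have hn1 : (1 : ℝ) ≤ |(n : ℝ)| := by
    rw [← Int.cast_abs]
    exact_mod_cast Int.one_le_abs hn
  have habs : |x| < |x + n| := by
    have : |(n : ℝ)| - |x| ≤ |x + n| := by
      have := abs_sub_abs_le_abs_sub (n : ℝ) (-x)
      simp only [sub_neg_eq_add, abs_neg] at this
      rw [add_comm] at this
      linarith
    linarith
  have hxn0 : x + n ≠ 0 := by
    intro h
    rw [h, abs_zero] at habs
    exact absurd habs (not_lt.mpr (abs_nonneg x))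
  have hsin : Real.sin (π * (x + n)) ^ 2 = Real.sin (π * x) ^ 2 := by
    have : π * (x + n) = π * x + n * π := by ring
    rw [this, Real.sin_add_int_mul_pi]
    rw [mul_pow]
    rcases Int.even_or_odd n with he | ho
    · rw [he.neg_one_zpow]; ring
    · rw [ho.neg_one_zpow]; ring
  have hsinpos : 0 < Real.sin (π * x) ^ 2 := by
    have h1' : Real.sin (π * x) ≠ 0 := by
      intro h
      have hlt : |π * x| < π := by
        rw [abs_mul, abs_of_pos Real.pi_pos]
        nlinarith [Real.pi_pos]
      have hne : π * x ≠ 0 := mul_ne_zero (ne_of_gt Real.pi_pos) hx0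
      rcases lt_or_gt_of_ne hne with hneg | hpos
      · have := Real.sin_pos_of_pos_of_lt_pi (x := -(π * x)) (by linarith)
          (by rw [abs_of_neg hneg] at hlt; linarith)
        rw [Real.sin_neg, h] at this; simp at this
      · have := Real.sin_pos_of_pos_of_lt_pi hpos
          (by rw [abs_of_pos hpos] at hlt; linarith)
        rw [h] at this; simp at this
    positivity
  have hden : (π * x) ^ 2 < (π * (x + n)) ^ 2 := by
    have h2 : x ^ 2 < (x + n) ^ 2 := by
      have := sq_abs x; have := sq_abs (x + n)
      nlinarith [abs_nonneg x]
    have hpi2 : (0:ℝ) < π ^ 2 := by positivity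
    calc (π * x) ^ 2 = π ^ 2 * x ^ 2 := by ring
      _ < π ^ 2 * (x + n) ^ 2 := mul_lt_mul_of_pos_left h2 hpi2
      _ = (π * (x + n)) ^ 2 := by ring
  have hdpos : 0 < (π * x) ^ 2 := by positivity
  rw [_root_.sinc, _root_.sinc, if_neg hxn0, if_neg hx0, div_pow, div_pow, hsin]
  exact div_lt_div_of_pos_left hsinpos hdpos hden
end
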